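/- Let all variables be discrete and suppose q̂_a satisfies Σ_z q̂_a(z,a',x)·p(z | w, a', x) = p(w|a,x)/p(w|a',x) for all w,a',x, and p̂(w|a,x) = p(w|a,x). Then for arbitrary ĥ and arbitrary p̂(A=a|X) > 0, defining η̂₁(x,a'',a) := Σ_w ĥ(w,a'',x)·p(w|a,x), bar-ĥ(w,x) := Σ_{a'} ĥ(w,a',x)·p̂'(a'|x) with p̂'(a'|x) = p(a'|x), and η̂₂(x,a) := Σ_{w,a'} ĥ(w,a',x)·p(w|a,x)·p(a'|x), we have E[ q̂_a(Z,A,X)·(Y − ĥ(W,A,X)) + I(A=a)/p̂(A=a|X)·(bar-ĥ(W,X) − η̂₂(X,a)) + η̂₁(X,A,a) ] = E[ Y·q̂_a(Z,A,X) ]. -/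
import Mathlib


open Finset
open scoped Classical

noncomputable section

/-- Probability of an event under weights `mu`. -/
def pr {O : Type} [Fintype O] (mu : O -> Real) (s : O -> Prop) : Real :=
  Finset.univ.sum (fun w => if s w then mu w else 0)

/-- Conditional probability `P(s | t)`. -/
def cpr {O : Type} [Fintype O] (mu : O -> Real) (s t : O -> Prop) : Real :=
  pr mu (fun w => s w /\ t w) / pr mu t

/-- Expectation of `f`. -/
def expec {O : Type} [Fintype O] (mu : O -> Real) (f : O -> Real) : Real :=
  Finset.univ.sum (fun w => f w * mu w)

/-- Conditional expectation `E[f | t]`. -/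
def cexp {O : Type} [Fintype O] (mu : O -> Real) (f : O -> Real) (t : O -> Prop) : Real :=
  (Finset.univ.sum (fun w => if t w then f w * mu w else 0)) / pr mu t

theorem pr_nonneg' {O : Type} [Fintype O] (mu : O -> Real) (h : ∀ o, 0 ≤ mu o)
    (s : O -> Prop) : 0 ≤ pr mu s :=
  Finset.sum_nonneg fun o _ => by by_cases hs : s o <;> simp [hs, h o]

theorem pr_mono' {O : Type} [Fintype O] (mu : O -> Real) (h0 : ∀ o, 0 ≤ mu o)
    (s t : O -> Prop) (hst : ∀ o, s o → t o) : pr mu s ≤ pr mu t :=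
  Finset.sum_le_sum fun o _ => by
    by_cases hs : s o
    · simp [hs, hst o hs]
    · by_cases ht : t o <;> simp [hs, ht, h0 o]

theorem pr_zero' {O : Type} [Fintype O] (mu : O -> Real) (h0 : ∀ o, 0 ≤ mu o)
    (s t : O -> Prop) (hst : ∀ o, s o → t o) (ht : pr mu t = 0) : pr mu s = 0 :=
  le_antisymm (ht ▸ pr_mono' mu h0 s t hst) (pr_nonneg' mu h0 s)

theorem pr_congr' {O : Type} [Fintype O] (mu : O -> Real) (s t : O -> Prop)
    (h : ∀ o, s o ↔ t o) : pr mu s = pr mu t :=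
  Finset.sum_congr rfl fun o _ => if_congr (h o) rfl rfl

theorem expec_fiber' {O I : Type} [Fintype O] [Fintype I] [DecidableEq I]
    (mu : O -> Real) (K : O -> I) (f : I -> Real) :
    (∑ i : I, f i * pr mu (fun o => K o = i)) = expec mu (fun o => f (K o)) := by
  unfold pr expec
  simp_rw [Finset.mul_sum, mul_ite, mul_zero]
  rw [Finset.sum_comm]
  refine Finset.sum_congr rfl fun o _ => ?_
  simp [Finset.sum_ite_eq]

theorem pr_partition' {O I : Type} [Fintype O] [Fintype I] [DecidableEq I]
    (mu : O -> Real) (K : O -> I) (t : O -> Prop) :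
    (∑ i : I, pr mu (fun o => K o = i ∧ t o)) = pr mu t := by
  unfold pr
  rw [Finset.sum_comm]
  refine Finset.sum_congr rfl fun o _ => ?_
  by_cases ht : t o
  · simp [ht, Finset.sum_ite_eq]
  · simp [ht]

theorem stmt13
    {O TA TM TZ TW TX : Type}
    [Fintype O] [Fintype TA] [Fintype TM] [Fintype TZ] [Fintype TW] [Fintype TX]
    [DecidableEq TA] [DecidableEq TM] [DecidableEq TZ] [DecidableEq TW] [DecidableEq TX]
    (mu : O -> Real) (hmu0 : forall o : O, 0 <= mu o)
    (hmu1 : Finset.univ.sum mu = 1)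
    (A : O -> TA) (Y : O -> Real) (M : O -> TM) (Z : O -> TZ) (W : O -> TW) (X : O -> TX)
    (a : TA) (q : TZ -> TA -> TX -> Real)
    (hq : forall (v : TW) (t : TA) (x : TX),
      Finset.univ.sum (fun z : TZ =>
        q z t x * cpr mu (fun o => Z o = z) (fun o => W o = v /\ A o = t /\ X o = x)) =
      cpr mu (fun o => W o = v) (fun o => A o = a /\ X o = x) /
        cpr mu (fun o => W o = v) (fun o => A o = t /\ X o = x))
    (hhat : TW -> TA -> TX -> Real) (epA : TX -> Real)
    (hepA : forall x : TX, 0 < epA x)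
    (hpos : forall (v : TW) (t : TA) (x : TX), 0 < pr mu (fun o => X o = x) ->
      0 < pr mu (fun o => W o = v /\ A o = t /\ X o = x))
 :
    expec mu (fun o =>
      q (Z o) (A o) (X o) * (Y o - hhat (W o) (A o) (X o)) +
      (if A o = a then (1 : Real) else 0) / epA (X o) *
        ((Finset.univ.sum (fun a' : TA =>
            hhat (W o) a' (X o) * cpr mu (fun o' => A o' = a') (fun o' => X o' = X o))) -
          Finset.univ.sum (fun a' : TA => Finset.univ.sum (fun v : TW =>
            hhat v a' (X o) * cpr mu (fun o' => W o' = v) (fun o' => A o' = a /\ X o' = X o) *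
              cpr mu (fun o' => A o' = a') (fun o' => X o' = X o)))) +
      Finset.univ.sum (fun v : TW =>
        hhat v (A o) (X o) * cpr mu (fun o' => W o' = v) (fun o' => A o' = a /\ X o' = X o))) =
    expec mu (fun o => Y o * q (Z o) (A o) (X o)) := by
  classical
  -- key identity from hq
  have key : ∀ (w : TW) (t : TA) (x : TX),
      (∑ z : TZ, q z t x * pr mu (fun o => Z o = z ∧ W o = w ∧ A o = t ∧ X o = x))
        = cpr mu (fun o' => W o' = w) (fun o' => A o' = a ∧ X o' = x) *
            pr mu (fun o => A o = t ∧ X o = x) := by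
    intro w t x
    by_cases hx : 0 < pr mu (fun o => X o = x)
    · have h3t := hpos w t x hx
      have h3a := hpos w a x hx
      have h2t : 0 < pr mu (fun o => A o = t ∧ X o = x) :=
        lt_of_lt_of_le h3t (pr_mono' mu hmu0 _ _ fun o ho => ho.2)
      have h2a : 0 < pr mu (fun o => A o = a ∧ X o = x) :=
        lt_of_lt_of_le h3a (pr_mono' mu hmu0 _ _ fun o ho => ho.2)
      have hqe := hq w t x
      simp only [cpr] at hqe ⊢
      calc (∑ z : TZ, q z t x * pr mu (fun o => Z o = z ∧ W o = w ∧ A o = t ∧ X o = x))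
          = ∑ z : TZ, pr mu (fun o => W o = w ∧ A o = t ∧ X o = x) *
              (q z t x * (pr mu (fun o => Z o = z ∧ W o = w ∧ A o = t ∧ X o = x) /
                pr mu (fun o => W o = w ∧ A o = t ∧ X o = x))) := by
            refine Finset.sum_congr rfl fun z _ => ?_
            field_simp
        _ = pr mu (fun o => W o = w ∧ A o = t ∧ X o = x) *
              ∑ z : TZ, q z t x * (pr mu (fun o => Z o = z ∧ W o = w ∧ A o = t ∧ X o = x) /
                pr mu (fun o => W o = w ∧ A o = t ∧ X o = x)) := by
            rw [Finset.mul_sum]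
        _ = pr mu (fun o => W o = w ∧ A o = t ∧ X o = x) *
              (pr mu (fun o => W o = w ∧ A o = a ∧ X o = x) / pr mu (fun o => A o = a ∧ X o = x) /
                (pr mu (fun o => W o = w ∧ A o = t ∧ X o = x) / pr mu (fun o => A o = t ∧ X o = x))) := by
            rw [hqe]
        _ = pr mu (fun o => W o = w ∧ A o = a ∧ X o = x) / pr mu (fun o => A o = a ∧ X o = x) *
              pr mu (fun o => A o = t ∧ X o = x) := by
            field_simp
    · have hx0 : pr mu (fun o => X o = x) = 0 :=
        le_antisymm (not_lt.mp hx) (pr_nonneg' mu hmu0 _)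
      have hz : ∀ z : TZ, pr mu (fun o => Z o = z ∧ W o = w ∧ A o = t ∧ X o = x) = 0 :=
        fun z => pr_zero' mu hmu0 _ _ (fun o ho => ho.2.2.2) hx0
      have hwa : pr mu (fun o => W o = w ∧ A o = a ∧ X o = x) = 0 :=
        pr_zero' mu hmu0 _ _ (fun o ho => ho.2.2) hx0
      simp only [cpr]
      simp [hz, hwa]
  -- per-x cancellation for the augmentation term
  have keyx : ∀ x : TX,
      (∑ w : TW,
        ((∑ a' : TA, hhat w a' x * cpr mu (fun o' => A o' = a') (fun o' => X o' = x)) -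
          ∑ a' : TA, ∑ v : TW, hhat v a' x *
            cpr mu (fun o' => W o' = v) (fun o' => A o' = a ∧ X o' = x) *
            cpr mu (fun o' => A o' = a') (fun o' => X o' = x)) *
          pr mu (fun o => W o = w ∧ A o = a ∧ X o = x)) = 0 := by
    intro x
    by_cases hd : pr mu (fun o => A o = a ∧ X o = x) = 0
    · refine Finset.sum_eq_zero fun w _ => ?_
      rw [pr_zero' mu hmu0 _ _ (fun o ho => ho.2) hd, mul_zero]
    · have hpart := pr_partition' mu W (fun o => A o = a ∧ X o = x)
      simp only [cpr]
      calc (∑ w : TW,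
            ((∑ a' : TA, hhat w a' x *
                (pr mu (fun o' => A o' = a' ∧ X o' = x) / pr mu (fun o' => X o' = x))) -
              ∑ a' : TA, ∑ v : TW, hhat v a' x *
                (pr mu (fun o' => W o' = v ∧ A o' = a ∧ X o' = x) /
                  pr mu (fun o' => A o' = a ∧ X o' = x)) *
                (pr mu (fun o' => A o' = a' ∧ X o' = x) / pr mu (fun o' => X o' = x))) *
              pr mu (fun o => W o = w ∧ A o = a ∧ X o = x))
          = (∑ w : TW, (∑ a' : TA, hhat w a' x *
                (pr mu (fun o' => A o' = a' ∧ X o' = x) / pr mu (fun o' => X o' = x))) *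
                pr mu (fun o => W o = w ∧ A o = a ∧ X o = x)) -
            ∑ w : TW, (∑ a' : TA, ∑ v : TW, hhat v a' x *
                (pr mu (fun o' => W o' = v ∧ A o' = a ∧ X o' = x) /
                  pr mu (fun o' => A o' = a ∧ X o' = x)) *
                (pr mu (fun o' => A o' = a' ∧ X o' = x) / pr mu (fun o' => X o' = x))) *
                pr mu (fun o => W o = w ∧ A o = a ∧ X o = x) := by
            rw [← Finset.sum_sub_distrib]
            exact Finset.sum_congr rfl fun w _ => sub_mul _ _ _
        _ = (∑ w : TW, ∑ a' : TA, hhat w a' x *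
                (pr mu (fun o' => A o' = a' ∧ X o' = x) / pr mu (fun o' => X o' = x)) *
                pr mu (fun o => W o = w ∧ A o = a ∧ X o = x)) -
            (∑ a' : TA, ∑ v : TW, hhat v a' x *
                (pr mu (fun o' => W o' = v ∧ A o' = a ∧ X o' = x) /
                  pr mu (fun o' => A o' = a ∧ X o' = x)) *
                (pr mu (fun o' => A o' = a' ∧ X o' = x) / pr mu (fun o' => X o' = x))) *
                pr mu (fun o => A o = a ∧ X o = x) := by
            rw [← Finset.mul_sum, hpart]
            congr 1
            exact Finset.sum_congr rfl fun w _ => Finset.sum_mul _ _ _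
        _ = 0 := by
            rw [sub_eq_zero, Finset.sum_comm, Finset.sum_mul]
            refine Finset.sum_congr rfl fun a' _ => ?_
            rw [Finset.sum_mul]
            refine Finset.sum_congr rfl fun v _ => ?_
            have hrw : hhat v a' x *
                (pr mu (fun o' => W o' = v ∧ A o' = a ∧ X o' = x) /
                  pr mu (fun o' => A o' = a ∧ X o' = x)) *
                (pr mu (fun o' => A o' = a' ∧ X o' = x) / pr mu (fun o' => X o' = x)) *
                pr mu (fun o => A o = a ∧ X o = x)
              = hhat v a' x *
                (pr mu (fun o' => A o' = a' ∧ X o' = x) / pr mu (fun o' => X o' = x)) *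
                (pr mu (fun o' => W o' = v ∧ A o' = a ∧ X o' = x) /
                  pr mu (fun o' => A o' = a ∧ X o' = x) *
                  pr mu (fun o => A o = a ∧ X o = x)) := by ring
            rw [hrw, div_mul_cancel₀ _ hd]
  -- the three expectations
  have h1 : expec mu (fun o => q (Z o) (A o) (X o) * hhat (W o) (A o) (X o))
      = ∑ t : TA, ∑ x : TX, (∑ w : TW, hhat w t x *
          cpr mu (fun o' => W o' = w) (fun o' => A o' = a ∧ X o' = x)) *
          pr mu (fun o => A o = t ∧ X o = x) := by
    calc expec mu (fun o => q (Z o) (A o) (X o) * hhat (W o) (A o) (X o))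
        = ∑ p : TW × TA × TX × TZ,
            (q p.2.2.2 p.2.1 p.2.2.1 * hhat p.1 p.2.1 p.2.2.1) *
              pr mu (fun o => (W o, A o, X o, Z o) = p) :=
          (expec_fiber' mu (fun o => (W o, A o, X o, Z o))
            (fun p => q p.2.2.2 p.2.1 p.2.2.1 * hhat p.1 p.2.1 p.2.2.1)).symm
      _ = ∑ w : TW, ∑ t : TA, ∑ x : TX, ∑ z : TZ,
            q z t x * hhat w t x * pr mu (fun o => Z o = z ∧ W o = w ∧ A o = t ∧ X o = x) := by
          simp only [Fintype.sum_prod_type]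
          refine Finset.sum_congr rfl fun w _ => Finset.sum_congr rfl fun t _ =>
            Finset.sum_congr rfl fun x _ => Finset.sum_congr rfl fun z _ => ?_
          congr 1
          exact pr_congr' mu _ _ fun o => by simp only [Prod.mk.injEq]; tauto
      _ = ∑ w : TW, ∑ t : TA, ∑ x : TX, hhat w t x *
            (cpr mu (fun o' => W o' = w) (fun o' => A o' = a ∧ X o' = x) *
              pr mu (fun o => A o = t ∧ X o = x)) := by
          refine Finset.sum_congr rfl fun w _ => Finset.sum_congr rfl fun t _ =>
            Finset.sum_congr rfl fun x _ => ?_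
          rw [← key w t x, Finset.mul_sum]
          exact Finset.sum_congr rfl fun z _ => by ring
      _ = ∑ t : TA, ∑ x : TX, (∑ w : TW, hhat w t x *
            cpr mu (fun o' => W o' = w) (fun o' => A o' = a ∧ X o' = x)) *
            pr mu (fun o => A o = t ∧ X o = x) := by
          rw [Finset.sum_comm]
          refine Finset.sum_congr rfl fun t _ => ?_
          rw [Finset.sum_comm]
          refine Finset.sum_congr rfl fun x _ => ?_
          rw [Finset.sum_mul]
          exact Finset.sum_congr rfl fun w _ => by ring
  have h3 : expec mu (fun o => ∑ v : TW, hhat v (A o) (X o) *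
        cpr mu (fun o' => W o' = v) (fun o' => A o' = a ∧ X o' = X o))
      = ∑ t : TA, ∑ x : TX, (∑ w : TW, hhat w t x *
          cpr mu (fun o' => W o' = w) (fun o' => A o' = a ∧ X o' = x)) *
          pr mu (fun o => A o = t ∧ X o = x) := by
    calc expec mu (fun o => ∑ v : TW, hhat v (A o) (X o) *
          cpr mu (fun o' => W o' = v) (fun o' => A o' = a ∧ X o' = X o))
        = ∑ p : TA × TX, (∑ v : TW, hhat v p.1 p.2 *
            cpr mu (fun o' => W o' = v) (fun o' => A o' = a ∧ X o' = p.2)) *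
            pr mu (fun o => (A o, X o) = p) :=
          (expec_fiber' mu (fun o => (A o, X o)) (fun p => ∑ v : TW, hhat v p.1 p.2 *
            cpr mu (fun o' => W o' = v) (fun o' => A o' = a ∧ X o' = p.2))).symm
      _ = _ := by
          simp only [Fintype.sum_prod_type]
          refine Finset.sum_congr rfl fun t _ => Finset.sum_congr rfl fun x _ => ?_
          congr 1
          exact pr_congr' mu _ _ fun o => by simp only [Prod.mk.injEq]
  have h2 : expec mu (fun o => (if A o = a then (1 : Real) else 0) / epA (X o) *
      ((∑ a' : TA, hhat (W o) a' (X o) * cpr mu (fun o' => A o' = a') (fun o' => X o' = X o)) -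
        ∑ a' : TA, ∑ v : TW, hhat v a' (X o) *
          cpr mu (fun o' => W o' = v) (fun o' => A o' = a ∧ X o' = X o) *
          cpr mu (fun o' => A o' = a') (fun o' => X o' = X o))) = 0 := by
    calc expec mu (fun o => (if A o = a then (1 : Real) else 0) / epA (X o) *
        ((∑ a' : TA, hhat (W o) a' (X o) * cpr mu (fun o' => A o' = a') (fun o' => X o' = X o)) -
          ∑ a' : TA, ∑ v : TW, hhat v a' (X o) *
            cpr mu (fun o' => W o' = v) (fun o' => A o' = a ∧ X o' = X o) *
            cpr mu (fun o' => A o' = a') (fun o' => X o' = X o)))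
        = ∑ p : TW × TA × TX, ((if p.2.1 = a then (1 : Real) else 0) / epA p.2.2 *
            ((∑ a' : TA, hhat p.1 a' p.2.2 * cpr mu (fun o' => A o' = a') (fun o' => X o' = p.2.2)) -
              ∑ a' : TA, ∑ v : TW, hhat v a' p.2.2 *
                cpr mu (fun o' => W o' = v) (fun o' => A o' = a ∧ X o' = p.2.2) *
                cpr mu (fun o' => A o' = a') (fun o' => X o' = p.2.2))) *
            pr mu (fun o => (W o, A o, X o) = p) :=
          (expec_fiber' mu (fun o => (W o, A o, X o))
            (fun p => (if p.2.1 = a then (1 : Real) else 0) / epA p.2.2 *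
            ((∑ a' : TA, hhat p.1 a' p.2.2 * cpr mu (fun o' => A o' = a') (fun o' => X o' = p.2.2)) -
              ∑ a' : TA, ∑ v : TW, hhat v a' p.2.2 *
                cpr mu (fun o' => W o' = v) (fun o' => A o' = a ∧ X o' = p.2.2) *
                cpr mu (fun o' => A o' = a') (fun o' => X o' = p.2.2)))).symm
      _ = ∑ w : TW, ∑ t : TA, ∑ x : TX, (if t = a then (1 : Real) else 0) / epA x *
            ((∑ a' : TA, hhat w a' x * cpr mu (fun o' => A o' = a') (fun o' => X o' = x)) -
              ∑ a' : TA, ∑ v : TW, hhat v a' x *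
                cpr mu (fun o' => W o' = v) (fun o' => A o' = a ∧ X o' = x) *
                cpr mu (fun o' => A o' = a') (fun o' => X o' = x)) *
            pr mu (fun o => W o = w ∧ A o = t ∧ X o = x) := by
          simp only [Fintype.sum_prod_type]
          refine Finset.sum_congr rfl fun w _ => Finset.sum_congr rfl fun t _ =>
            Finset.sum_congr rfl fun x _ => ?_
          congr 1
          exact pr_congr' mu _ _ fun o => by simp only [Prod.mk.injEq]
      _ = ∑ w : TW, ∑ x : TX,
            ((∑ a' : TA, hhat w a' x * cpr mu (fun o' => A o' = a') (fun o' => X o' = x)) -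
              ∑ a' : TA, ∑ v : TW, hhat v a' x *
                cpr mu (fun o' => W o' = v) (fun o' => A o' = a ∧ X o' = x) *
                cpr mu (fun o' => A o' = a') (fun o' => X o' = x)) *
            pr mu (fun o => W o = w ∧ A o = a ∧ X o = x) / epA x := by
          refine Finset.sum_congr rfl fun w _ => ?_
          rw [Finset.sum_comm]
          refine Finset.sum_congr rfl fun x _ => ?_
          rw [Finset.sum_eq_single a (fun t _ ht => by simp [ht])
            (fun h => absurd (Finset.mem_univ a) h)]
          rw [if_pos rfl]
          ring
      _ = 0 := by
          rw [Finset.sum_comm]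
          refine Finset.sum_eq_zero fun x _ => ?_
          rw [← Finset.sum_div, keyx x, zero_div]
  have hsplit : expec mu (fun o =>
      q (Z o) (A o) (X o) * (Y o - hhat (W o) (A o) (X o)) +
      (if A o = a then (1 : Real) else 0) / epA (X o) *
        ((Finset.univ.sum (fun a' : TA =>
            hhat (W o) a' (X o) * cpr mu (fun o' => A o' = a') (fun o' => X o' = X o))) -
          Finset.univ.sum (fun a' : TA => Finset.univ.sum (fun v : TW =>
            hhat v a' (X o) * cpr mu (fun o' => W o' = v) (fun o' => A o' = a /\ X o' = X o) *
              cpr mu (fun o' => A o' = a') (fun o' => X o' = X o)))) +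
      Finset.univ.sum (fun v : TW =>
        hhat v (A o) (X o) * cpr mu (fun o' => W o' = v) (fun o' => A o' = a /\ X o' = X o)))
      = expec mu (fun o => Y o * q (Z o) (A o) (X o)) +
        (expec mu (fun o => (if A o = a then (1 : Real) else 0) / epA (X o) *
          ((∑ a' : TA, hhat (W o) a' (X o) * cpr mu (fun o' => A o' = a') (fun o' => X o' = X o)) -
            ∑ a' : TA, ∑ v : TW, hhat v a' (X o) *
              cpr mu (fun o' => W o' = v) (fun o' => A o' = a ∧ X o' = X o) *
              cpr mu (fun o' => A o' = a') (fun o' => X o' = X o))) +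
          (expec mu (fun o => ∑ v : TW, hhat v (A o) (X o) *
              cpr mu (fun o' => W o' = v) (fun o' => A o' = a ∧ X o' = X o)) -
            expec mu (fun o => q (Z o) (A o) (X o) * hhat (W o) (A o) (X o)))) := by
    simp only [expec]
    rw [← Finset.sum_sub_distrib, ← Finset.sum_add_distrib, ← Finset.sum_add_distrib]
    exact Finset.sum_congr rfl fun o _ => by ring
  refine hsplit.trans ?_
  rw [h2, h1, h3]
  ring
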